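/- Let h ≥ r be positive integers and 0 < β < 1. There exists α > 0 depending only on h, r, β such that for every graph G on n vertices with p = p_r(G) > 4j n^{-1/r}, for each i ∈ [h] and r ≤ j ≤ h: ∑_{S ∈ A*_{i,j}} |N(S)|^r ≥ (1/2^{j+1} − β) n^{j+r} p^{jr}, where A*_{i,j} is the set of i-good length-j sequences with pairwise distinct entries. -/

import Mathlib

/-- The common neighborhood of a sequence of vertices. -/
def commNbhd {V : Type} (G : SimpleGraph V) {j : ℕ} (S : Fin j → V) : Set V :=
  {v | ∀ a : Fin j, G.Adj (S a) v}

/-- The `r`-norm density `p_r(G) := ((∑_v d(v)^r)/n^{r+1})^{1/r}`. -/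
noncomputable def rnormDensity {V : Type} [Fintype V] (G : SimpleGraph V)
    [DecidableRel G.Adj] (r : ℕ) : ℝ :=
  ((∑ v : V, (G.degree v : ℝ) ^ r) / (Fintype.card V : ℝ) ^ (r + 1)) ^ ((r : ℝ)⁻¹)

/-- `IsGood G α β p h i j S` : the length-`j` vertex sequence `S` is `i`-good relative
to `(α, β, h, r)` in `G`, where `p = p_r(G)`. A sequence `T` is `0`-good if
`|N(T)| ≥ α p^{|T|} n`; for `i ≥ 1`, `S` is `i`-good if it is `0`-good and for every
`|S| ≤ k ≤ h`, at least `(1-β)|N(S)|^k` of the length-`k` sequences in `N(S)` are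
`(i-1)`-good. -/
def IsGood {V : Type} [Fintype V] (G : SimpleGraph V) (α β p : ℝ) (h : ℕ) :
    ℕ → (j : ℕ) → (Fin j → V) → Prop
  | 0, j, S => α * p ^ j * (Fintype.card V : ℝ) ≤ (Nat.card (commNbhd G S) : ℝ)
  | i + 1, j, S =>
      (α * p ^ j * (Fintype.card V : ℝ) ≤ (Nat.card (commNbhd G S) : ℝ)) ∧
      ∀ k : ℕ, j ≤ k → k ≤ h →
        (1 - β) * (Nat.card (commNbhd G S) : ℝ) ^ k ≤
          (Nat.card {T : Fin k → V // (∀ a, T a ∈ commNbhd G S) ∧ IsGood G α β p h i k T} : ℝ)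

/-!
Write `x_S = |N(S)|`. Sequences that are not good carry little weight: by induction on `i`,
the sum of `x_S^m` over the length-`j` sequences that are not `i`-good is at most
`errConst β h d · p^{jm} n^{j+m}`. A sequence fails to be `(i+1)`-good either because `x_S` is
small, or because for some `k` more than a `β`-fraction of its length-`k` extensions inside
`N(S)` fail to be `i`-good. Double counting the pairs `(S, T)` with `T ⊆ N(S)` bounds the total
`x_S^k` weight of the latter sequences by the inductive bound, and the power-mean inequality
turns this into a bound on their `x_S^m` weight.

On the other side, summing `x_S^r` over injective `S` counts pairs `(S, U)` with `S ⊆ N(U)`,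
which gives `∑_U (x_U)_j`. Since `∑_U x_U = ∑_v d(v)^r = p^r n^{r+1}`, Jensen's inequality and
the density assumption `p^r n ≥ 4j` bound this from below by `p^{jr} n^{j+r} / 2^{j+1}`.
-/

open Finset

theorem Finset.pow_sum_pow_le_card_pow_mul_sum_pow {ι : Type*} (s : Finset ι) {f : ι → ℝ}
    (hf : ∀ i ∈ s, 0 ≤ f i) {m k : ℕ} (hm : 0 < m) (hmk : m ≤ k) :
    (∑ i ∈ s, f i ^ m) ^ k ≤ (#s : ℝ) ^ (k - m) * (∑ i ∈ s, f i ^ k) ^ m := by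
  have hm' : (m : ℝ) ≠ 0 := by positivity
  have hq : (1 : ℝ) ≤ k / m := by rw [one_le_div (by positivity)]; exact_mod_cast hmk
  have holder := Real.rpow_sum_le_const_mul_sum_rpow_of_nonneg (s := s) (f := fun i => f i ^ m)
    hq fun i hi => pow_nonneg (hf i hi) m
  have hpow : ∀ i ∈ s, (f i ^ m) ^ ((k : ℝ) / m) = f i ^ k := fun i hi => by
    rw [← Real.rpow_natCast, ← Real.rpow_mul (hf i hi), mul_div_cancel₀ _ hm', Real.rpow_natCast]
  rw [sum_congr rfl hpow] at holder
  have hsum : 0 ≤ ∑ i ∈ s, f i ^ m := sum_nonneg fun i hi => pow_nonneg (hf i hi) m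
  calc (∑ i ∈ s, f i ^ m) ^ k = ((∑ i ∈ s, f i ^ m) ^ ((k : ℝ) / m)) ^ m := by
        rw [← Real.rpow_natCast _ m, ← Real.rpow_mul hsum, div_mul_cancel₀ _ hm',
          Real.rpow_natCast]
    _ ≤ ((#s : ℝ) ^ ((k : ℝ) / m - 1) * ∑ i ∈ s, f i ^ k) ^ m := by gcongr
    _ = (#s : ℝ) ^ (k - m) * (∑ i ∈ s, f i ^ k) ^ m := by
        rw [mul_pow, ← Real.rpow_natCast _ m, ← Real.rpow_mul (by positivity), sub_mul,
          div_mul_cancel₀ _ hm', one_mul, ← Nat.cast_sub hmk, Real.rpow_natCast]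

theorem Nat.pow_le_two_pow_mul_descFactorial_add (x j : ℕ) :
    x ^ j ≤ 2 ^ j * x.descFactorial j + (2 * (j - 1)) ^ j := by
  by_cases hx : 2 * (j - 1) ≤ x
  · have hhalf : x ≤ 2 * (x + 1 - j) := by omega
    calc x ^ j ≤ (2 * (x + 1 - j)) ^ j := Nat.pow_le_pow_left hhalf j
      _ = 2 ^ j * (x + 1 - j) ^ j := mul_pow ..
      _ ≤ 2 ^ j * x.descFactorial j := by gcongr; exact x.pow_sub_le_descFactorial j
      _ ≤ _ := le_self_add
  · exact (Nat.pow_le_pow_left (by omega) j).trans (Nat.le_add_left _ _)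

theorem pow_lt_pow_mul_of_mul_rpow_lt {c n p : ℝ} {r : ℕ} (hr : r ≠ 0) (hc : 0 ≤ c)
    (hn : 0 < n) (h : c * n ^ (-(r : ℝ)⁻¹) < p) : c ^ r < p ^ r * n := by
  have hroot : (n ^ (-(r : ℝ)⁻¹)) ^ r = n⁻¹ := by
    rw [← Real.rpow_natCast, ← Real.rpow_mul hn.le, neg_mul, inv_mul_cancel₀ (by positivity),
      Real.rpow_neg_one]
  have := pow_lt_pow_left₀ h (by positivity) hr
  rw [mul_pow, hroot, ← div_eq_mul_inv, div_lt_iff₀ hn] at this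
  exact this

theorem sum_filter_le_add_sum_sum_filter {ι κ : Type*} [Fintype ι] (K : Finset κ)
    {P A : ι → Prop} {B : κ → ι → Prop} [DecidablePred P] [DecidablePred A]
    [∀ k, DecidablePred (B k)] {f : ι → ℝ} (hf : ∀ i, 0 ≤ f i)
    (hcover : ∀ i, P i → A i ∨ ∃ k ∈ K, B k i) :
    ∑ i with P i, f i ≤ ∑ i with A i, f i + ∑ k ∈ K, ∑ i with B k i, f i := by
  simp only [sum_filter]
  rw [sum_comm, ← sum_add_distrib]
  refine sum_le_sum fun i _ => ?_
  have hB : 0 ≤ ∑ k ∈ K, if B k i then f i else 0 := sum_nonneg fun k _ => by split <;> simp [hf]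
  split
  · rcases hcover i ‹_› with hA | ⟨k, hk, hBk⟩
    · simpa [hA] using hB
    · refine le_add_of_nonneg_of_le (by split <;> simp [hf]) ?_
      exact (if_pos hBk).symm.le.trans (single_le_sum (f := fun k => if B k i then f i else 0)
        (fun k _ => by split <;> simp [hf]) hk)
  · exact add_nonneg (by split <;> simp [hf]) hB

theorem sum_filter_le_sum_filter_and_add_sum_filter_not {ι : Type*} (s : Finset ι) {P Q : ι → Prop}
    [DecidablePred P] [DecidablePred Q] {f : ι → ℝ} (hf : ∀ i, 0 ≤ f i) :
    ∑ i ∈ s with Q i, f i ≤ ∑ i ∈ s with P i ∧ Q i, f i + ∑ i ∈ s with ¬ P i, f i := by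
  rw [← sum_filter_add_sum_filter_not (s.filter Q) P, filter_filter, filter_filter]
  refine add_le_add (by simp_rw [and_comm]; rfl)
    (sum_le_sum_of_subset_of_nonneg ?_ fun _ _ _ => hf _)
  intro i
  simp only [mem_filter]
  tauto

theorem Nat.card_fun_forall_mem {V : Type*} (t : Set V) (k : ℕ) :
    Nat.card {T : Fin k → V // ∀ a, T a ∈ t} = Nat.card t ^ k := by
  rw [Nat.card_congr (Equiv.subtypePiEquivPi (p := fun _ v => v ∈ t)), Nat.card_pi]
  simp

theorem Nat.card_injective_forall_mem {V : Type*} [Finite V] (t : Set V) (j : ℕ) :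
    Nat.card {S : Fin j → V // Function.Injective S ∧ ∀ b, S b ∈ t} =
      (Nat.card t).descFactorial j := by
  have : Fintype t := Fintype.ofFinite t
  let e : {S : Fin j → V // Function.Injective S ∧ ∀ b, S b ∈ t} ≃ (Fin j ↪ t) :=
    { toFun S := ⟨fun b => ⟨S.1 b, S.2.2 b⟩, fun a b hab => S.2.1 congr(Subtype.val $hab)⟩
      invFun e := ⟨fun b => e b, fun a b hab => e.injective (Subtype.ext hab), fun b => (e b).2⟩ }
  rw [Nat.card_congr e, Nat.card_eq_fintype_card, Fintype.card_embedding_eq, Fintype.card_fin,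
    Nat.card_eq_fintype_card]

section CommonNeighborhood

open scoped Classical

variable {V : Type} (G : SimpleGraph V)

theorem forall_mem_commNbhd_comm {j k : ℕ} (S : Fin j → V) (T : Fin k → V) :
    (∀ a, T a ∈ commNbhd G S) ↔ ∀ b, S b ∈ commNbhd G T :=
  ⟨fun H b a => (H a b).symm, fun H a b => (H b a).symm⟩

theorem commNbhd_fin_one (T : Fin 1 → V) : commNbhd G T = G.neighborSet (T 0) := by
  ext; simp [commNbhd, Fin.forall_fin_one, G.adj_comm]

theorem sum_card_commNbhd_comm {j k : ℕ} (A : Finset (Fin j → V)) (B : Finset (Fin k → V)) :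
    ∑ S ∈ A, #{T ∈ B | ∀ a, T a ∈ commNbhd G S} = ∑ T ∈ B, #{S ∈ A | ∀ b, S b ∈ commNbhd G T} := by
  simp_rw [← forall_mem_commNbhd_comm G]
  exact sum_card_bipartiteAbove_eq_sum_card_bipartiteBelow _

variable [Fintype V]

theorem card_filter_forall_mem_commNbhd {j : ℕ} (S : Fin j → V) (k : ℕ) :
    #{T : Fin k → V | ∀ a, T a ∈ commNbhd G S} = Nat.card (commNbhd G S) ^ k := by
  rw [← Nat.card_fun_forall_mem, Nat.card_eq_fintype_card, Fintype.card_subtype]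

theorem sum_card_commNbhd_eq_sum_degree_pow [DecidableRel G.Adj] (r : ℕ) :
    ∑ U : Fin r → V, Nat.card (commNbhd G U) = ∑ v, G.degree v ^ r := by
  have := sum_card_commNbhd_comm G (univ : Finset (Fin r → V)) (univ : Finset (Fin 1 → V))
  simp only [card_filter_forall_mem_commNbhd, pow_one] at this
  rw [this, ← (Equiv.funUnique (Fin 1) V).symm.sum_comp]
  refine sum_congr rfl fun v _ => ?_
  rw [commNbhd_fin_one, ← SimpleGraph.card_neighborSet_eq_degree, Nat.card_eq_fintype_card]
  rfl

theorem sum_injective_card_commNbhd_pow (j r : ℕ) :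
    ∑ S : Fin j → V with Function.Injective S, Nat.card (commNbhd G S) ^ r =
      ∑ U : Fin r → V, (Nat.card (commNbhd G U)).descFactorial j := by
  have := sum_card_commNbhd_comm G {S : Fin j → V | Function.Injective S}
    (univ : Finset (Fin r → V))
  simp only [card_filter_forall_mem_commNbhd, filter_filter] at this
  rw [this]
  refine sum_congr rfl fun U _ => ?_
  rw [← Nat.card_injective_forall_mem, Nat.card_eq_fintype_card, Fintype.card_subtype]

theorem sum_card_commNbhd_pow_le (j r : ℕ) :
    ∑ U : Fin r → V, (Nat.card (commNbhd G U) : ℝ) ^ j ≤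
      2 ^ j * ∑ S : Fin j → V with Function.Injective S, (Nat.card (commNbhd G S) : ℝ) ^ r +
        (Fintype.card V : ℝ) ^ r * (2 * (j - 1 : ℕ)) ^ j := by
  have := calc ∑ U : Fin r → V, Nat.card (commNbhd G U) ^ j
      ≤ ∑ U : Fin r → V, (2 ^ j * (Nat.card (commNbhd G U)).descFactorial j + (2 * (j - 1)) ^ j) :=
        sum_le_sum fun U _ => Nat.pow_le_two_pow_mul_descFactorial_add _ j
    _ = 2 ^ j * ∑ S : Fin j → V with Function.Injective S, Nat.card (commNbhd G S) ^ r +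
          Fintype.card V ^ r * (2 * (j - 1)) ^ j := by
        rw [sum_add_distrib, ← mul_sum, sum_injective_card_commNbhd_pow, sum_const, card_univ,
          Fintype.card_fun, Fintype.card_fin, smul_eq_mul]
  exact_mod_cast this

end CommonNeighborhood

/-- The recursion is what makes `c = errConst β h q / (2h)` fit the hypothesis
`β c^h` of `sum_pow_filter_many_extensions_le` at level `q + 1`, while the at most `h` values of
`k` in `not_isGood_succ` cost the factor `h`. -/
noncomputable def errConst (β : ℝ) (h : ℕ) : ℕ → ℝ
  | 0 => β
  | q + 1 => β * (errConst β h q / (2 * h)) ^ h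

section ErrConst

variable {β : ℝ} {h : ℕ}

theorem errConst_zero : errConst β h 0 = β := rfl

theorem errConst_pos (hβ : 0 < β) (hh : 0 < h) : ∀ q, 0 < errConst β h q
  | 0 => hβ
  | q + 1 => by
    have := errConst_pos hβ hh q
    simp only [errConst]
    positivity

theorem errConst_div_le_self (hβ : 0 < β) (hh : 0 < h) (q : ℕ) :
    errConst β h q / (2 * h) ≤ errConst β h q := by
  have : (1 : ℝ) ≤ h := by exact_mod_cast hh
  exact div_le_self (errConst_pos hβ hh q).le (by linarith)

theorem errConst_le_one (hβ0 : 0 < β) (hβ1 : β ≤ 1) (hh : 0 < h) : ∀ q, errConst β h q ≤ 1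
  | 0 => hβ1
  | q + 1 => by
    have hc := (errConst_div_le_self hβ0 hh q).trans (errConst_le_one hβ0 hβ1 hh q)
    have := errConst_pos hβ0 hh q
    calc β * (errConst β h q / (2 * h)) ^ h ≤ 1 * 1 := by
          gcongr
          exact pow_le_one₀ (by positivity) hc
      _ = 1 := one_mul 1

theorem errConst_antitone (hβ0 : 0 < β) (hβ1 : β ≤ 1) (hh : 0 < h) :
    Antitone (errConst β h) := by
  refine antitone_nat_of_succ_le fun q => ?_
  have hc := errConst_div_le_self hβ0 hh q
  have := errConst_pos hβ0 hh q
  calc β * (errConst β h q / (2 * h)) ^ h ≤ 1 * (errConst β h q / (2 * h)) := by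
        gcongr
        exact pow_le_of_le_one (by positivity) (hc.trans (errConst_le_one hβ0 hβ1 hh q))
          hh.ne'
    _ ≤ errConst β h q := by rw [one_mul]; exact hc

theorem pow_le_errConst_div_two {α : ℝ} {d i m : ℕ} (hβ0 : 0 < β) (hβ1 : β ≤ 1) (hh : 0 < h)
    (hα : 0 ≤ α) (hm : m ≠ 0) (hαd : α ≤ errConst β h (d + i) / 2) :
    α ^ m ≤ errConst β h d / 2 := by
  have hαs : α ≤ errConst β h d / 2 :=
    hαd.trans (by gcongr; exact errConst_antitone hβ0 hβ1 hh (Nat.le_add_right d i))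
  exact (pow_le_of_le_one hα (by linarith [errConst_le_one hβ0 hβ1 hh d]) hm).trans hαs

end ErrConst

section Goodness

open scoped Classical

variable {V : Type} [Fintype V] (G : SimpleGraph V)

theorem card_extensions_add_card_extensions_not {j k : ℕ} (S : Fin j → V)
    (Q : (Fin k → V) → Prop) :
    Nat.card {T : Fin k → V // (∀ a, T a ∈ commNbhd G S) ∧ Q T} +
        Nat.card {T : Fin k → V // (∀ a, T a ∈ commNbhd G S) ∧ ¬ Q T} =
      Nat.card (commNbhd G S) ^ k := by
  rw [← card_filter_forall_mem_commNbhd, ← card_filter_add_card_filter_not (p := Q),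
    filter_filter, filter_filter]
  simp only [Nat.card_eq_fintype_card, Fintype.card_subtype]

theorem sum_card_extensions_eq {j k : ℕ} (Q : (Fin k → V) → Prop) [DecidablePred Q] :
    ∑ S : Fin j → V, Nat.card {T : Fin k → V // (∀ a, T a ∈ commNbhd G S) ∧ Q T} =
      ∑ T with Q T, Nat.card (commNbhd G T) ^ j := by
  have := sum_card_commNbhd_comm G (univ : Finset (Fin j → V)) {T : Fin k → V | Q T}
  simp only [card_filter_forall_mem_commNbhd, filter_filter] at this
  rw [← this]
  simp only [Nat.card_eq_fintype_card, Fintype.card_subtype, and_comm]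

theorem sum_not_isGood_zero_pow_le {α β p : ℝ} {h j m : ℕ} (hα : 0 ≤ α) (hp : 0 ≤ p) :
    ∑ S with ¬ IsGood G α β p h 0 j S, (Nat.card (commNbhd G S) : ℝ) ^ m ≤
      α ^ m * (p ^ (j * m) * (Fintype.card V : ℝ) ^ (j + m)) := by
  calc _ ≤ ∑ _S : Fin j → V, (α * p ^ j * Fintype.card V) ^ m := by
        refine (sum_le_sum fun S hS => ?_).trans
          (sum_le_sum_of_subset_of_nonneg (filter_subset _ _) fun _ _ _ => by positivity)
        exact pow_le_pow_left₀ (by positivity) (not_le.1 (mem_filter.1 hS).2).le m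
    _ = _ := by simp only [sum_const, card_univ, Fintype.card_fun, Fintype.card_fin]; ring

theorem not_isGood_succ {α β p : ℝ} {h i j : ℕ} {S : Fin j → V}
    (hS : ¬ IsGood G α β p h (i + 1) j S) :
    ¬ IsGood G α β p h 0 j S ∨ ∃ k ∈ Icc j h, β * (Nat.card (commNbhd G S) : ℝ) ^ k <
      Nat.card {T : Fin k → V // (∀ a, T a ∈ commNbhd G S) ∧ ¬ IsGood G α β p h i k T} := by
  rw [IsGood, not_and_or] at hS
  refine hS.imp id fun hext => ?_
  push Not at hext
  obtain ⟨k, hjk, hkh, hlt⟩ := hext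
  refine ⟨k, mem_Icc.2 ⟨hjk, hkh⟩, ?_⟩
  have hsplit := congrArg (Nat.cast (R := ℝ))
    (card_extensions_add_card_extensions_not G S (IsGood G α β p h i k))
  push_cast at hsplit
  linarith

theorem sum_pow_filter_many_extensions_le {j k : ℕ} (Q : (Fin k → V) → Prop) [DecidablePred Q]
    {β c p : ℝ} {h m : ℕ} (hβ : 0 < β) (hc0 : 0 ≤ c) (hc1 : c ≤ 1) (hp : 0 ≤ p) (hm : 0 < m)
    (hmk : m ≤ k) (hkh : k ≤ h)
    (hQ : ∑ T with Q T, (Nat.card (commNbhd G T) : ℝ) ^ j ≤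
      β * c ^ h * (p ^ (k * j) * (Fintype.card V : ℝ) ^ (k + j))) :
    ∑ S : Fin j → V with β * (Nat.card (commNbhd G S) : ℝ) ^ k <
        Nat.card {T : Fin k → V // (∀ a, T a ∈ commNbhd G S) ∧ Q T},
      (Nat.card (commNbhd G S) : ℝ) ^ m ≤
      c * (p ^ (j * m) * (Fintype.card V : ℝ) ^ (j + m)) := by
  set n : ℝ := (Fintype.card V : ℝ)
  set F : Finset (Fin j → V) := {S : Fin j → V | β * (Nat.card (commNbhd G S) : ℝ) ^ k <
    Nat.card {T : Fin k → V // (∀ a, T a ∈ commNbhd G S) ∧ Q T}}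
  have hB : ∑ S ∈ F, (Nat.card (commNbhd G S) : ℝ) ^ k ≤ c ^ h * (p ^ (k * j) * n ^ (k + j)) := by
    refine le_of_mul_le_mul_left ?_ hβ
    calc β * ∑ S ∈ F, (Nat.card (commNbhd G S) : ℝ) ^ k
        ≤ ∑ S ∈ F, (Nat.card {T : Fin k → V // (∀ a, T a ∈ commNbhd G S) ∧ Q T} : ℝ) := by
          rw [mul_sum]; exact sum_le_sum fun S hS => (mem_filter.1 hS).2.le
      _ ≤ ∑ S, (Nat.card {T : Fin k → V // (∀ a, T a ∈ commNbhd G S) ∧ Q T} : ℝ) :=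
          sum_le_univ_sum_of_nonneg fun _ => by positivity
      _ = ∑ T with Q T, (Nat.card (commNbhd G T) : ℝ) ^ j := by
          exact_mod_cast sum_card_extensions_eq G Q
      _ ≤ β * (c ^ h * (p ^ (k * j) * n ^ (k + j))) := by rw [← mul_assoc]; exact hQ
  have hF : (#F : ℝ) ≤ n ^ j :=
    calc (#F : ℝ) ≤ Fintype.card (Fin j → V) := by exact_mod_cast card_le_univ F
      _ = n ^ j := by simp [n]
  refine le_of_pow_le_pow_left₀ (by omega : k ≠ 0) (by positivity) ?_
  obtain ⟨t, rfl⟩ := Nat.exists_eq_add_of_le hmk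
  calc (∑ S ∈ F, (Nat.card (commNbhd G S) : ℝ) ^ m) ^ (m + t)
      ≤ (#F : ℝ) ^ (m + t - m) * (∑ S ∈ F, (Nat.card (commNbhd G S) : ℝ) ^ (m + t)) ^ m :=
        F.pow_sum_pow_le_card_pow_mul_sum_pow (fun _ _ => by positivity) hm hmk
    _ ≤ (n ^ j) ^ t * (c ^ h * (p ^ ((m + t) * j) * n ^ (m + t + j))) ^ m := by
        rw [Nat.add_sub_cancel_left]; gcongr
    _ ≤ (n ^ j) ^ t * (c ^ (m + t) * (p ^ ((m + t) * j) * n ^ (m + t + j)) ^ m) := by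
        rw [mul_pow]
        gcongr
        rw [← pow_mul]
        exact pow_le_pow_of_le_one hc0 hc1 (hkh.trans (Nat.le_mul_of_pos_right h hm))
    _ = (c * (p ^ (j * m) * n ^ (j + m))) ^ (m + t) := by ring

theorem sum_not_isGood_succ_pow_le {α β p : ℝ} {h i d j m : ℕ} (hβ0 : 0 < β) (hβ1 : β ≤ 1)
    (hα : 0 ≤ α) (hp : 0 ≤ p) (hαm : α ^ m ≤ errConst β h d / 2) (hm : 0 < m) (hmj : m ≤ j)
    (hjh : j ≤ h)
    (hbad : ∀ k ∈ Icc j h, ∑ T : Fin k → V with ¬ IsGood G α β p h i k T,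
      (Nat.card (commNbhd G T) : ℝ) ^ j ≤
        errConst β h (d + 1) * (p ^ (k * j) * (Fintype.card V : ℝ) ^ (k + j))) :
    ∑ S : Fin j → V with ¬ IsGood G α β p h (i + 1) j S, (Nat.card (commNbhd G S) : ℝ) ^ m ≤
      errConst β h d * (p ^ (j * m) * (Fintype.card V : ℝ) ^ (j + m)) := by
  have hh : 0 < h := by omega
  have hs := errConst_pos hβ0 hh d
  set P := p ^ (j * m) * (Fintype.card V : ℝ) ^ (j + m)
  set c := errConst β h d / (2 * h) with hc
  have hc1 : c ≤ 1 := (errConst_div_le_self hβ0 hh d).trans (errConst_le_one hβ0 hβ1 hh d)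
  have hIcc : ((Icc j h).card : ℝ) ≤ h := by
    rw [Nat.card_Icc]; exact_mod_cast (by omega : h + 1 - j ≤ h)
  refine (sum_filter_le_add_sum_sum_filter (Icc j h) (fun _ => by positivity)
    fun _ => not_isGood_succ G).trans ?_
  calc _ ≤ α ^ m * P + ∑ k ∈ Icc j h, c * P := by
        refine add_le_add (sum_not_isGood_zero_pow_le G hα hp) (sum_le_sum fun k hk => ?_)
        obtain ⟨hjk, hkh⟩ := mem_Icc.1 hk
        exact sum_pow_filter_many_extensions_le G _ hβ0 (by positivity) hc1 hp hm (hmj.trans hjk)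
          hkh (hbad k hk)
    _ ≤ errConst β h d / 2 * P + h * (c * P) := by rw [sum_const, nsmul_eq_mul]; gcongr
    _ = errConst β h d * P := by
        have hhc : (h : ℝ) * c = errConst β h d / 2 := by rw [hc]; field_simp
        rw [← mul_assoc (h : ℝ), hhc]
        ring

theorem sum_not_isGood_pow_le {α β p : ℝ} {h : ℕ} (hβ0 : 0 < β) (hβ1 : β ≤ 1) (hα : 0 ≤ α)
    (hp : 0 ≤ p) (i : ℕ) {d j m : ℕ} (hαd : α ≤ errConst β h (d + i) / 2) (hm : 0 < m)
    (hmj : m ≤ j) (hjh : j ≤ h) :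
    ∑ S : Fin j → V with ¬ IsGood G α β p h i j S, (Nat.card (commNbhd G S) : ℝ) ^ m ≤
      errConst β h d * (p ^ (j * m) * (Fintype.card V : ℝ) ^ (j + m)) := by
  have hh : 0 < h := by omega
  induction i generalizing d j m with
  | zero =>
    refine (sum_not_isGood_zero_pow_le G hα hp).trans ?_
    gcongr
    linarith [pow_le_errConst_div_two hβ0 hβ1 hh hα hm.ne' hαd, errConst_pos hβ0 hh d]
  | succ i ih =>
    refine sum_not_isGood_succ_pow_le G hβ0 hβ1 hα hp
      (pow_le_errConst_div_two hβ0 hβ1 hh hα hm.ne' hαd) hm hmj hjh fun k hk => ?_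
    obtain ⟨hjk, hkh⟩ := mem_Icc.1 hk
    exact ih (d := d + 1) (by rwa [add_right_comm]) (hm.trans_le hmj) hjk hkh

end Goodness

section Density

variable {V : Type} [Fintype V] (G : SimpleGraph V) [DecidableRel G.Adj]

theorem rnormDensity_nonneg (r : ℕ) : 0 ≤ rnormDensity G r :=
  Real.rpow_nonneg (by positivity) _

theorem rnormDensity_pow_mul [Nonempty V] {r : ℕ} (hr : r ≠ 0) :
    rnormDensity G r ^ r * (Fintype.card V : ℝ) ^ (r + 1) = ∑ v, (G.degree v : ℝ) ^ r := by
  have hn : (0 : ℝ) < Fintype.card V := by exact_mod_cast Fintype.card_pos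
  rw [rnormDensity, ← Real.rpow_natCast, ← Real.rpow_mul (by positivity),
    inv_mul_cancel₀ (by positivity), Real.rpow_one, div_mul_cancel₀ _ (by positivity)]

open scoped Classical in
theorem pow_mul_pow_le_sum_injective_card_commNbhd_pow [Nonempty V] {r j : ℕ} (hr : r ≠ 0)
    (hj : j ≠ 0) (hdens : 4 * j ≤ rnormDensity G r ^ r * Fintype.card V) :
    rnormDensity G r ^ (j * r) * (Fintype.card V : ℝ) ^ (j + r) ≤
      2 ^ (j + 1) * ∑ S : Fin j → V with Function.Injective S,
        (Nat.card (commNbhd G S) : ℝ) ^ r := by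
  have hsum : ∑ U : Fin r → V, (Nat.card (commNbhd G U) : ℝ) =
      rnormDensity G r ^ r * (Fintype.card V : ℝ) ^ (r + 1) := by
    rw [rnormDensity_pow_mul G hr]
    exact_mod_cast sum_card_commNbhd_eq_sum_degree_pow G r
  have hsplit := sum_card_commNbhd_pow_le G j r
  set p := rnormDensity G r
  set n : ℝ := (Fintype.card V : ℝ)
  have hjensen :
      p ^ (j * r) * n ^ (j + r) ≤ ∑ U : Fin r → V, (Nat.card (commNbhd G U) : ℝ) ^ j := by
    obtain ⟨j', rfl⟩ := Nat.exists_eq_succ_of_ne_zero hj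
    have := pow_sum_le_card_mul_sum_pow (s := univ)
      (f := fun U : Fin r → V => (Nat.card (commNbhd G U) : ℝ)) (fun _ _ => by positivity) j'
    rw [hsum, card_univ, Fintype.card_fun, Fintype.card_fin] at this
    refine le_of_mul_le_mul_left ?_ (by positivity : (0 : ℝ) < (n ^ r) ^ j')
    calc (n ^ r) ^ j' * (p ^ ((j' + 1) * r) * n ^ (j' + 1 + r))
          = (p ^ r * n ^ (r + 1)) ^ (j' + 1) := by ring
      _ ≤ _ := by simpa [n] using this
  have hfactor : 2 * (2 * (j - 1)) ^ j ≤ (4 * j) ^ j :=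
    calc 2 * (2 * (j - 1)) ^ j ≤ 2 ^ j * (2 * (j - 1)) ^ j := by
          gcongr; exact Nat.le_self_pow hj 2
      _ = (2 * (2 * (j - 1))) ^ j := (mul_pow ..).symm
      _ ≤ (4 * j) ^ j := Nat.pow_le_pow_left (by omega) j
  -- the `U` with `x_U < 2 (j - 1)`, the error term of `hsplit`, carry at most half the weight
  have hsmall : 2 * (n ^ r * (2 * (j - 1 : ℕ) : ℝ) ^ j) ≤ p ^ (j * r) * n ^ (j + r) :=
    calc 2 * (n ^ r * (2 * (j - 1 : ℕ) : ℝ) ^ j) = n ^ r * (2 * (2 * (j - 1 : ℕ) : ℝ) ^ j) := by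
          ring
      _ ≤ n ^ r * (4 * j) ^ j := by gcongr; exact_mod_cast hfactor
      _ ≤ n ^ r * (p ^ r * n) ^ j := by gcongr
      _ = p ^ (j * r) * n ^ (j + r) := by ring
  rw [pow_succ]
  linarith

end Density

open scoped Classical in
/-- **Lemma 3.6.** For `h ≥ r ≥ 1` and `0 < β < 1` there is `α > 0` such that for
every graph `G` on `n` vertices with `p = p_r(G) > 4j n^{-1/r}`, for each `i ∈ [h]`
and `r ≤ j ≤ h`, the sum of `|N(S)|^r` over `i`-good length-`j` sequences with
pairwise distinct entries is at least `(1/2^{j+1} - β) n^{j+r} p^{jr}`. -/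
theorem nested_goodness_distinct (h r : ℕ) (hr : 1 ≤ r) (hrh : r ≤ h) (β : ℝ)
    (hβ0 : 0 < β) (hβ1 : β < 1) :
    ∃ α : ℝ, 0 < α ∧
      ∀ (V : Type) [Fintype V] [Nonempty V] (G : SimpleGraph V) [DecidableRel G.Adj],
        ∀ i j : ℕ, 1 ≤ i → i ≤ h → r ≤ j → j ≤ h →
          rnormDensity G r > 4 * j * (Fintype.card V : ℝ) ^ (-(r : ℝ)⁻¹) →
          (1 / 2 ^ (j + 1) - β) * (Fintype.card V : ℝ) ^ (j + r) *
              rnormDensity G r ^ (j * r) ≤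
            ∑ S : Fin j → V,
              (if IsGood G α β (rnormDensity G r) h i j S ∧ Function.Injective S then
                (Nat.card (commNbhd G S) : ℝ) ^ r else 0) := by
  have hh : 0 < h := by omega
  have hε := errConst_pos hβ0 hh h
  refine ⟨errConst β h h / 2, by positivity, ?_⟩
  intro V _ _ G _ i j hi1 hih hrj hjh hp
  have hn : (0 : ℝ) < Fintype.card V := by exact_mod_cast Fintype.card_pos
  have hj : (1 : ℝ) ≤ j := by exact_mod_cast hr.trans hrj
  have hdens : 4 * j ≤ rnormDensity G r ^ r * Fintype.card V :=
    (le_self_pow₀ (by linarith) (by omega)).trans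
      (pow_lt_pow_mul_of_mul_rpow_lt (by omega) (by positivity) hn hp).le
  have hdistinct := pow_mul_pow_le_sum_injective_card_commNbhd_pow G (by omega) (by omega) hdens
  have hαi : errConst β h h / 2 ≤ errConst β h (0 + i) / 2 := by
    rw [zero_add]; gcongr; exact errConst_antitone hβ0 hβ1.le hh hih
  have hbad := sum_not_isGood_pow_le G hβ0 hβ1.le (by positivity) (rnormDensity_nonneg G r) i hαi
    hr hrj hjh
  have hsplit := sum_filter_le_sum_filter_and_add_sum_filter_not univ
    (P := IsGood G (errConst β h h / 2) β (rnormDensity G r) h i j) (Q := Function.Injective)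
    (f := fun S => (Nat.card (commNbhd G S) : ℝ) ^ r) fun _ => by positivity
  rw [← div_le_iff₀' (by positivity)] at hdistinct
  rw [errConst_zero] at hbad
  rw [← sum_filter]
  calc (1 / 2 ^ (j + 1) - β) * (Fintype.card V : ℝ) ^ (j + r) * rnormDensity G r ^ (j * r)
      = rnormDensity G r ^ (j * r) * (Fintype.card V : ℝ) ^ (j + r) / 2 ^ (j + 1) -
          β * (rnormDensity G r ^ (j * r) * (Fintype.card V : ℝ) ^ (j + r)) := by ring
    _ ≤ _ := by linarith
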